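/- arXiv:2110.10193 — 4 statements merged into one kernel-verified Lean document; each statement's English description precedes it below -/
import Mathlib

section
/- For any two random variables X and Y on a probability space, |E(exp(iuX) | Y)|² ≤ 1 - (ψ')²(1 - |E(exp(iuX))|²) almost surely, where ψ' = ψ'(σ(Y), σ(X)) is the lower psi-mixing coefficient. -/
open MeasureTheory Complex

/-!
Write `ψ = ψ'(σ(Y), σ(X))`, `f = exp (i u X)` and `t = ‖E f‖`. The mixing inequality
`P (A ∩ B) ≥ ψ P(A) P(B)` says that for `A ∈ σ(Y)` the measure `P (A ∩ ·)` dominates `ψ P(A) P`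
on `σ(X)`; integrating a nonnegative `σ(X)`-measurable `g` gives `E[g | Y] ≥ ψ E g`. For `‖z‖ ≤ 1`,
`g = 1 - Re (z f)` is such a function, whence `Re (z E[f | Y]) ≤ 1 - ψ (1 - t)`; letting `z` run
over a dense subset of the unit circle, `‖E[f | Y]‖ ≤ 1 - ψ (1 - t)`. Finally
`(1 - ψ (1 - t))² = 1 - ψ² (1 - t²) - 2 ψ (1 - ψ) (1 - t)`.
-/

/-- lower psi-mixing coefficient of two sub-sigma-algebras. -/
noncomputable def psiLower {Ω : Type*} [MeasurableSpace Ω] (μ : Measure Ω)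
    (𝒜 ℬ : MeasurableSpace Ω) : ℝ :=
  sInf { r : ℝ | ∃ A B : Set Ω, MeasurableSet[𝒜] A ∧ MeasurableSet[ℬ] B ∧
    0 < (μ A).toReal * (μ B).toReal ∧
    r = (μ (A ∩ B)).toReal / ((μ A).toReal * (μ B).toReal) }

lemma Complex.norm_le_of_forall_rat_re_exp_mul_le {w : ℂ} {s : ℝ}
    (h : ∀ q : ℚ, (exp (q * I) * w).re ≤ s) : ‖w‖ ≤ s := by
  have hθ : ∀ θ : ℝ, (exp (θ * I) * w).re ≤ s := fun θ =>
    Rat.denseRange_cast.induction_on θ (isClosed_le (by fun_prop) continuous_const) h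
  have hrot : exp (↑(-w.arg) * I) * w = ‖w‖ := by
    conv_lhs => rw [← norm_mul_exp_arg_mul_I w, mul_left_comm, ← exp_add]
    simp
  have := hθ (-w.arg)
  rwa [hrot, ofReal_re] at this

section psiLower

variable {Ω : Type*} {𝒜 ℬ m : MeasurableSpace Ω} {μ : Measure Ω}

lemma psiLower_nonneg : 0 ≤ psiLower μ 𝒜 ℬ :=
  Real.sInf_nonneg fun _ ⟨_, _, _, _, _, hr⟩ => hr ▸ by positivity

lemma psiLower_le_one [IsProbabilityMeasure μ] : psiLower μ 𝒜 ℬ ≤ 1 := by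
  refine csInf_le ⟨0, fun _ ⟨_, _, _, _, _, hr⟩ => hr ▸ by positivity⟩
    ⟨Set.univ, Set.univ, MeasurableSet.univ, MeasurableSet.univ, ?_⟩
  simp

lemma psiLower_mul_le_measureReal_inter {A B : Set Ω} (hA : MeasurableSet[𝒜] A)
    (hB : MeasurableSet[ℬ] B) : psiLower μ 𝒜 ℬ * (μ.real A * μ.real B) ≤ μ.real (A ∩ B) := by
  rcases (by positivity : 0 ≤ μ.real A * μ.real B).lt_or_eq with hpos | hzero
  · rw [← le_div_iff₀ hpos]
    exact csInf_le ⟨0, fun _ ⟨_, _, _, _, _, hr⟩ => hr ▸ by positivity⟩ ⟨A, B, hA, hB, hpos, rfl⟩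
  · rw [← hzero, mul_zero]
    exact measureReal_nonneg

lemma smul_trim_le_restrict_trim_of_psiLower (hℬ : ℬ ≤ m) [IsFiniteMeasure μ] {A : Set Ω}
    (hA : MeasurableSet[𝒜] A) :
    ENNReal.ofReal (psiLower μ 𝒜 ℬ * μ.real A) • μ.trim hℬ ≤ (μ.restrict A).trim hℬ := by
  refine Measure.le_iff.2 fun B hB => ?_
  rw [Measure.smul_apply, smul_eq_mul, trim_measurableSet_eq hℬ hB, trim_measurableSet_eq hℬ hB,
    Measure.restrict_apply (hℬ _ hB), Set.inter_comm, ← ofReal_measureReal,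
    ← ofReal_measureReal, ← ENNReal.ofReal_mul (mul_nonneg psiLower_nonneg measureReal_nonneg)]
  exact ENNReal.ofReal_le_ofReal <|
    (mul_assoc _ _ _).trans_le (psiLower_mul_le_measureReal_inter hA hB)

lemma psiLower_mul_integral_le_setIntegral (hℬ : ℬ ≤ m) [IsFiniteMeasure μ] {g : Ω → ℝ}
    (hg : StronglyMeasurable[ℬ] g) (hg_nonneg : 0 ≤ g) (hg_int : Integrable g μ) {A : Set Ω}
    (hA : MeasurableSet[𝒜] A) :
    psiLower μ 𝒜 ℬ * μ.real A * ∫ ω, g ω ∂μ ≤ ∫ ω in A, g ω ∂μ := by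
  have hc : 0 ≤ psiLower μ 𝒜 ℬ * μ.real A := mul_nonneg psiLower_nonneg measureReal_nonneg
  calc psiLower μ 𝒜 ℬ * μ.real A * ∫ ω, g ω ∂μ
      = ∫ ω, g ω ∂(ENNReal.ofReal (psiLower μ 𝒜 ℬ * μ.real A) • μ.trim hℬ) := by
        rw [integral_smul_measure, ENNReal.toReal_ofReal hc, integral_trim hℬ hg, smul_eq_mul]
    _ ≤ ∫ ω, g ω ∂((μ.restrict A).trim hℬ) :=
        integral_mono_measure (smul_trim_le_restrict_trim_of_psiLower hℬ hA)
          (ae_of_all _ hg_nonneg) (hg_int.restrict.trim hℬ hg)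
    _ = ∫ ω in A, g ω ∂μ := (integral_trim hℬ hg).symm

lemma psiLower_mul_integral_le_condExp (h𝒜 : 𝒜 ≤ m) (hℬ : ℬ ≤ m) [IsFiniteMeasure μ]
    {g : Ω → ℝ} (hg : StronglyMeasurable[ℬ] g) (hg_nonneg : 0 ≤ g) (hg_int : Integrable g μ) :
    ∀ᵐ ω ∂μ, psiLower μ 𝒜 ℬ * ∫ ω, g ω ∂μ ≤ μ[g|𝒜] ω := by
  refine ae_le_of_ae_le_trim (hm := h𝒜) (ae_le_of_forall_setIntegral_le (integrable_const _)
    (integrable_condExp.trim h𝒜 stronglyMeasurable_condExp) fun A hA _ => ?_)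
  rw [← setIntegral_trim h𝒜 stronglyMeasurable_condExp hA, setIntegral_condExp h𝒜 hg_int hA,
    setIntegral_const, smul_eq_mul, measureReal_def, trim_measurableSet_eq h𝒜 hA, mul_comm,
    ← measureReal_def, mul_right_comm]
  exact psiLower_mul_integral_le_setIntegral hℬ hg hg_nonneg hg_int hA

lemma re_mul_condExp_le_of_psiLower (h𝒜 : 𝒜 ≤ m) (hℬ : ℬ ≤ m) [IsProbabilityMeasure μ]
    {f : Ω → ℂ} (hf : StronglyMeasurable[ℬ] f) (hf_le : ∀ ω, ‖f ω‖ ≤ 1) {z : ℂ} (hz : ‖z‖ ≤ 1) :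
    ∀ᵐ ω ∂μ, (z * μ[f|𝒜] ω).re ≤ 1 - psiLower μ 𝒜 ℬ * (1 - ‖∫ ω, f ω ∂μ‖) := by
  set L : ℂ →L[ℝ] ℝ := reCLM.comp (ContinuousLinearMap.lsmul ℝ ℂ z)
  have hL_le : ∀ w, L w ≤ ‖w‖ := fun w => calc
    L w = (z * w).re := rfl
    _ ≤ ‖z‖ * ‖w‖ := (re_le_norm _).trans_eq (norm_mul z w)
    _ ≤ ‖w‖ := mul_le_of_le_one_left (norm_nonneg w) hz
  have hf_int : Integrable f μ :=
    .of_bound (hf.mono hℬ).aestronglyMeasurable 1 (ae_of_all _ hf_le)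
  set g : Ω → ℝ := fun ω => (-L) (f ω) + 1
  have hg_int : Integrable g μ := ((-L).integrable_comp hf_int).add (integrable_const 1)
  have hg_nonneg : 0 ≤ g := fun ω => by
    simpa [g] using (hL_le (f ω)).trans (hf_le ω)
  have hg_integral : ∫ ω, g ω ∂μ = 1 - L (∫ ω, f ω ∂μ) := by
    rw [integral_add ((-L).integrable_comp hf_int) (integrable_const 1),
      (-L).integral_comp_comm hf_int, integral_const]
    simp [sub_eq_neg_add]
  have hψ := psiLower_mul_integral_le_condExp h𝒜 hℬ
    (((-L).continuous.comp_stronglyMeasurable hf).add_const 1) hg_nonneg hg_int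
  filter_upwards [hψ, (-L).comp_condExp_add_const_comm h𝒜 hf_int 1] with ω hω hω_eq
  have : psiLower μ 𝒜 ℬ * (1 - ‖∫ ω, f ω ∂μ‖) ≤ 1 - L (μ[f|𝒜] ω) := calc
    _ ≤ psiLower μ 𝒜 ℬ * ∫ ω, g ω ∂μ := by
      rw [hg_integral]; gcongr; exacts [psiLower_nonneg, hL_le _]
    _ ≤ μ[g|𝒜] ω := hω
    _ = 1 - L (μ[f|𝒜] ω) := by rw [← hω_eq]; simp [sub_eq_neg_add]
  change L (μ[f|𝒜] ω) ≤ _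
  linarith

lemma norm_condExp_le_of_psiLower (h𝒜 : 𝒜 ≤ m) (hℬ : ℬ ≤ m) [IsProbabilityMeasure μ]
    {f : Ω → ℂ} (hf : StronglyMeasurable[ℬ] f) (hf_le : ∀ ω, ‖f ω‖ ≤ 1) :
    ∀ᵐ ω ∂μ, ‖μ[f|𝒜] ω‖ ≤ 1 - psiLower μ 𝒜 ℬ * (1 - ‖∫ ω, f ω ∂μ‖) := by
  have h := ae_all_iff.2 fun q : ℚ =>
    re_mul_condExp_le_of_psiLower (μ := μ) h𝒜 hℬ hf hf_le (norm_exp_ofReal_mul_I q).le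
  filter_upwards [h] with ω hω using norm_le_of_forall_rat_re_exp_mul_le hω

end psiLower

lemma sq_one_sub_mul_one_sub_le {a t : ℝ} (ha₀ : 0 ≤ a) (ha₁ : a ≤ 1) (ht : t ≤ 1) :
    (1 - a * (1 - t)) ^ 2 ≤ 1 - a ^ 2 * (1 - t ^ 2) := by
  nlinarith [mul_nonneg (mul_nonneg ha₀ (sub_nonneg.2 ha₁)) (sub_nonneg.2 ht)]

/-- Lemma 7 of the paper: for any two random variables `X` and `Y`,
`|E(exp(iuX) | Y)|² ≤ 1 - ψ'² (1 - |E exp(iuX)|²)` a.s., where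
`ψ' = ψ'(σ(Y), σ(X))`. -/
theorem condexp_charFun_bound {Ω : Type*} [m : MeasurableSpace Ω] (μ : Measure Ω)
    [IsProbabilityMeasure μ] (X Y : Ω → ℝ) (hX : Measurable X) (hY : Measurable Y)
    (u : ℝ) :
    ∀ᵐ ω ∂μ,
      ‖(μ[fun ω' => Complex.exp (u * X ω' * I) | MeasurableSpace.comap Y inferInstance]) ω‖ ^ 2 ≤
        1 - (@psiLower Ω m μ (MeasurableSpace.comap Y inferInstance)
              (MeasurableSpace.comap X inferInstance)) ^ 2 *
          (1 - ‖∫ ω' , Complex.exp (u * X ω' * I) ∂μ‖ ^ 2) := by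
  have hf : StronglyMeasurable[MeasurableSpace.comap X inferInstance]
      fun ω => exp (u * X ω * I) :=
    (by fun_prop : Continuous fun x : ℝ => exp (u * x * I)).comp_stronglyMeasurable
      (comap_measurable X).stronglyMeasurable
  have hf_norm : ∀ ω, ‖exp (u * X ω * I)‖ ≤ 1 := fun ω => by
    rw [← ofReal_mul, norm_exp_ofReal_mul_I]
  have hφ : ‖∫ ω, exp (u * X ω * I) ∂μ‖ ≤ 1 := by
    simpa using norm_integral_le_of_norm_le (integrable_const 1) (ae_of_all μ hf_norm)
  filter_upwards [norm_condExp_le_of_psiLower hY.comap_le hX.comap_le hf hf_norm] with ω hω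
  exact (pow_le_pow_left₀ (norm_nonneg _) hω 2).trans
    (sq_one_sub_mul_one_sub_le psiLower_nonneg (psiLower_le_one (μ := μ)) hφ)
end

section
/- Let (ξ_k)_{k≥1} be a Markov chain with transition probabilities Q_k(x,A) = P(ξ_k ∈ A | ξ_{k-1} = x) and marginals P_k, satisfying: there is a > 0 such that for all k ≥ 2 there is a set S'_k with P_{k-1}(S'_k) = 1 and Q_k(x,A) > a P_k(A) for all measurable A and x ∈ S'_k. Let X_j = g_j(ξ_j) for measurable functions g_j, S_n = X_1 + ... + X_n, and f_j(u) = E(exp(iuX_j)). Then for all n and all real u, |E(exp(iuS_n))| ≤ exp( -(a⁴/16) Σ_{j=1}^n (1 - |f_j(u)|²) ). -/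
/-!
Put `φ_j = exp(i u g_j)`, let `P_k` be the law of `ξ_k` and `f_k = E φ_k(ξ_k)`, and let
`H_{k,m}(x)` be the conditional expectation of `∏_{j=k+1}^{k+m} φ_j(ξ_j)` given `ξ_k = x`,
computed backwards through the kernels. By the Markov property the characteristic function of
`S_n` is `E[(φ_1 H_{1,n-1})(ξ_1)]`.

The mixing condition splits `Q_{k+1}(x, ·) = a P_{k+1} + ν_x` with `ν_x` of mass `1 - a`. So if
`|H_{k+1,m}| ≤ b` and `c = E[(φ_{k+1} H_{k+1,m})(ξ_{k+1})]`, then `H_{k,m+1}` stays within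
`(1 - a) b` of the constant `a c`; hence `|H_{k,m+1}| ≤ a |c| + (1 - a) b`, and the next `|c|` is
at most `a |f_k| |c| + (1 - a) b`. The potential `b + (a/2) |c|` therefore shrinks by the factor
`1 - (a²/3)(1 - |f_k|) ≤ exp(-(a⁴/16)(1 - |f_k|²))` at each step.
-/

open MeasureTheory Complex ProbabilityTheory

lemma MeasureTheory.Measure.integral_comp {𝓧 𝓨 E : Type*} [MeasurableSpace 𝓧]
    [MeasurableSpace 𝓨] [NormedAddCommGroup E] [NormedSpace ℝ E] {κ : Kernel 𝓧 𝓨}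
    {ν : Measure 𝓧} {f : 𝓨 → E} (hf : Integrable f (κ ∘ₘ ν)) :
    ∫ y, f y ∂(κ ∘ₘ ν) = ∫ x, ∫ y, f y ∂κ x ∂ν := by
  rw [Measure.comp_eq_comp_const_apply] at hf ⊢
  rw [Kernel.integral_comp hf, Kernel.const_apply]

lemma norm_integral_le_of_ae_norm_le {α E : Type*} [MeasurableSpace α] [NormedAddCommGroup E]
    [NormedSpace ℝ E] {μ : Measure α} [IsProbabilityMeasure μ] {f : α → E} {C : ℝ}
    (h : ∀ᵐ x ∂μ, ‖f x‖ ≤ C) : ‖∫ x, f x ∂μ‖ ≤ C := by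
  simpa using norm_integral_le_of_norm_le_const h

lemma norm_mul_le_of_norm_le_one_left {R : Type*} [SeminormedRing R] {x y : R} {b : ℝ}
    (hx : ‖x‖ ≤ 1) (hy : ‖y‖ ≤ b) : ‖x * y‖ ≤ b :=
  (norm_mul_le x y).trans <| (mul_le_of_le_one_left (norm_nonneg y) hx).trans hy

lemma norm_integral_mul_le_of_ae_norm_sub_le {𝓧 𝕜 : Type*} [MeasurableSpace 𝓧] [RCLike 𝕜]
    {P : Measure 𝓧} [IsProbabilityMeasure P] {φ h : 𝓧 → 𝕜} (hφ : StronglyMeasurable φ)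
    (hφ1 : ∀ y, ‖φ y‖ ≤ 1) (hh : Integrable h P) {z : 𝕜} {r : ℝ}
    (hhz : ∀ᵐ y ∂P, ‖h y - z‖ ≤ r) :
    ‖∫ y, φ y * h y ∂P‖ ≤ ‖∫ y, φ y ∂P‖ * ‖z‖ + r := by
  have hφint : Integrable φ P := Integrable.of_bound hφ.aestronglyMeasurable 1 (ae_of_all _ hφ1)
  have hrest : Integrable (fun y => φ y * (h y - z)) P :=
    (hh.sub (integrable_const z)).bdd_mul hφ.aestronglyMeasurable (ae_of_all _ hφ1)
  have hsplit : ∫ y, φ y * h y ∂P = (∫ y, φ y ∂P) * z + ∫ y, φ y * (h y - z) ∂P := by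
    rw [← integral_mul_const, ← integral_add (hφint.mul_const z) hrest]
    simp_rw [mul_sub, add_sub_cancel]
  rw [hsplit, ← norm_mul]
  refine (norm_add_le _ _).trans (add_le_add_right ?_ _)
  exact norm_integral_le_of_ae_norm_le (hhz.mono fun y => norm_mul_le_of_norm_le_one_left (hφ1 y))

section ConditionalLaw

variable {Ω 𝓧 𝓨 : Type*} {m mΩ : MeasurableSpace Ω} [MeasurableSpace 𝓧] [MeasurableSpace 𝓨]
  {μ : Measure Ω} [IsFiniteMeasure μ] {X : Ω → 𝓧} {Y : Ω → 𝓨} {κ : Kernel 𝓧 𝓨}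
  [IsMarkovKernel κ] (hm : m ≤ mΩ) (hX : Measurable[m] X) (hY : Measurable Y)
  (hcond : ∀ A, MeasurableSet A →
    μ[fun ω => A.indicator (fun _ => (1 : ℝ)) (Y ω) | m] =ᵐ[μ] fun ω => (κ (X ω) A).toReal)
include hm hX hY hcond

lemma map_restrict_eq_comp_of_condExp_indicator {s : Set Ω} (hs : MeasurableSet[m] s) :
    (μ.restrict s).map Y = κ ∘ₘ (μ.restrict s).map X := by
  ext A hA
  have hκA : Measurable fun x => κ x A := κ.measurable_coe hA
  rw [Measure.map_apply hY hA, Measure.bind_apply hA κ.aemeasurable,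
    lintegral_map hκA (hX.mono hm le_rfl)]
  have hreal : (μ.restrict s).real (Y ⁻¹' A) = ∫ ω in s, (κ (X ω) A).toReal ∂μ := by
    calc (μ.restrict s).real (Y ⁻¹' A)
        = ∫ ω in s, A.indicator (fun _ => (1 : ℝ)) (Y ω) ∂μ := by
          rw [← integral_indicator_one (hY hA)]; rfl
      _ = ∫ ω in s, (μ[fun ω => A.indicator (fun _ => (1 : ℝ)) (Y ω) | m]) ω ∂μ :=
          (setIntegral_condExp hm ((integrable_const 1).indicator hA |>.comp_measurable hY) hs).symm
      _ = ∫ ω in s, (κ (X ω) A).toReal ∂μ :=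
          setIntegral_congr_ae (hm s hs) ((hcond A hA).mono fun ω h _ => h)
  rw [integral_toReal (f := fun ω => κ (X ω) A) (hκA.comp (hX.mono hm le_rfl)).aemeasurable
    (ae_of_all _ fun ω => measure_lt_top _ _)] at hreal
  exact (ENNReal.toReal_eq_toReal_iff' (measure_ne_top _ _)
    (ne_top_of_le_ne_top (measure_ne_top (μ.restrict s) Set.univ) (by
      simpa using lintegral_mono (μ := μ.restrict s) fun ω => prob_le_one (μ := κ (X ω)) (s := A)))
    ).mp hreal

variable {E : Type*} [NormedAddCommGroup E] [NormedSpace ℝ E] [CompleteSpace E]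

lemma condExp_comp_ae_eq_integral_kernel {φ : 𝓨 → E} (hφ : StronglyMeasurable φ) {C : ℝ}
    (hφC : ∀ y, ‖φ y‖ ≤ C) :
    μ[fun ω => φ (Y ω) | m] =ᵐ[μ] fun ω => ∫ y, φ y ∂κ (X ω) := by
  have hκφ : StronglyMeasurable fun x => ∫ y, φ y ∂κ x := hφ.integral_kernel
  have hκφC : ∀ x, ‖∫ y, φ y ∂κ x‖ ≤ C := fun x =>
    norm_integral_le_of_ae_norm_le (ae_of_all _ hφC)
  refine (ae_eq_condExp_of_forall_setIntegral_eq hm ?_ (fun s _ _ => ?_) (fun s hs _ => ?_)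
    (hκφ.comp_measurable hX).aestronglyMeasurable).symm
  · exact Integrable.of_bound (hφ.comp_measurable hY).aestronglyMeasurable C
      (ae_of_all _ (hφC <| Y ·))
  · exact (Integrable.of_bound (hκφ.comp_measurable (hX.mono hm le_rfl)).aestronglyMeasurable C
      (ae_of_all _ (hκφC <| X ·))).integrableOn
  · change ∫ ω in s, ∫ y, φ y ∂κ (X ω) ∂μ = _
    rw [← integral_map (hX.mono hm le_rfl).aemeasurable (f := fun x => ∫ y, φ y ∂κ x)
      hκφ.aestronglyMeasurable,
      ← Measure.integral_comp (Integrable.of_bound hφ.aestronglyMeasurable C (ae_of_all _ hφC)),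
      ← map_restrict_eq_comp_of_condExp_indicator hm hX hY hcond hs,
      integral_map hY.aemeasurable hφ.aestronglyMeasurable]

lemma integral_mul_comp_eq_integral_mul_kernel {𝕜 : Type*} [RCLike 𝕜] {Ψ : Ω → 𝕜}
    (hΨ : StronglyMeasurable[m] Ψ) {D : ℝ} (hΨD : ∀ ω, ‖Ψ ω‖ ≤ D)
    {φ : 𝓨 → 𝕜} (hφ : StronglyMeasurable φ) {C : ℝ} (hφC : ∀ y, ‖φ y‖ ≤ C) :
    ∫ ω, Ψ ω * φ (Y ω) ∂μ = ∫ ω, Ψ ω * ∫ y, φ y ∂κ (X ω) ∂μ := calc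
  ∫ ω, Ψ ω * φ (Y ω) ∂μ = ∫ ω, (μ[fun ω => Ψ ω * φ (Y ω) | m]) ω ∂μ :=
    (integral_condExp hm).symm
  _ = ∫ ω, Ψ ω * (μ[fun ω => φ (Y ω) | m]) ω ∂μ :=
    integral_congr_ae <| condExp_stronglyMeasurable_bilin_of_bound (ContinuousLinearMap.mul ℝ 𝕜)
      hm hΨ (Integrable.of_bound (hφ.comp_measurable hY).aestronglyMeasurable C
        (ae_of_all _ (hφC <| Y ·))) D (ae_of_all _ hΨD)
  _ = ∫ ω, Ψ ω * ∫ y, φ y ∂κ (X ω) ∂μ :=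
    integral_congr_ae <| (condExp_comp_ae_eq_integral_kernel hm hX hY hcond hφ hφC).mono
      fun ω h => congrArg (Ψ ω * ·) h

end ConditionalLaw

section Minorization

variable {𝓧 : Type*} [MeasurableSpace 𝓧] {P κ : Measure 𝓧} [IsProbabilityMeasure P]
  [IsProbabilityMeasure κ] {a : ℝ}

lemma le_one_of_ofReal_smul_le (h : ENNReal.ofReal a • P ≤ κ) : a ≤ 1 := by
  have := h Set.univ
  simp only [Measure.smul_apply, measure_univ, smul_eq_mul, mul_one] at this
  exact (ENNReal.ofReal_le_one).mp this

lemma norm_integral_sub_smul_integral_le {E : Type*} [NormedAddCommGroup E] [NormedSpace ℝ E]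
    (ha : 0 ≤ a) (h : ENNReal.ofReal a • P ≤ κ) {w : 𝓧 → E} (hw : Integrable w κ) {β : ℝ}
    (hwβ : ∀ᵐ y ∂κ, ‖w y‖ ≤ β) :
    ‖∫ y, w y ∂κ - a • ∫ y, w y ∂P‖ ≤ (1 - a) * β := by
  have : IsFiniteMeasure (ENNReal.ofReal a • P) := isFiniteMeasure_of_le κ h
  set ν := κ - ENNReal.ofReal a • P
  have hνκ : ν ≤ κ := Measure.sub_le
  have hκ : ∫ y, w y ∂κ = ∫ y, w y ∂ν + a • ∫ y, w y ∂P := by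
    conv_lhs => rw [← Measure.sub_add_cancel_of_le h]
    rw [integral_add_measure (hw.mono_measure hνκ) (hw.mono_measure h), integral_smul_measure,
      ENNReal.toReal_ofReal ha]
  have hν : ν.real Set.univ = 1 - a := by
    rw [measureReal_def, Measure.sub_apply MeasurableSet.univ h, Measure.smul_apply,
      measure_univ, measure_univ, smul_eq_mul, mul_one,
      ENNReal.toReal_sub_of_le (ENNReal.ofReal_le_one.mpr (le_one_of_ofReal_smul_le h))
        ENNReal.one_ne_top, ENNReal.toReal_ofReal ha, ENNReal.toReal_one]
  rw [hκ, add_sub_cancel_right, ← hν, mul_comm]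
  exact norm_integral_le_of_norm_le_const (Measure.absolutelyContinuous_of_le hνκ hwβ)

end Minorization

section MarkovChain

variable {Ω 𝓧 : Type*} [MeasurableSpace 𝓧]

abbrev pastMeasurableSpace (ξ : ℕ → Ω → 𝓧) (k : ℕ) : MeasurableSpace Ω :=
  ⨆ i : Fin k, MeasurableSpace.comap (ξ i) inferInstance

lemma measurable_pastMeasurableSpace {ξ : ℕ → Ω → 𝓧} {i k : ℕ} (h : i < k) :
    Measurable[pastMeasurableSpace ξ k] (ξ i) :=
  Measurable.of_comap_le (le_iSup (fun i : Fin k => MeasurableSpace.comap (ξ i) inferInstance)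
    ⟨i, h⟩)

variable [MeasurableSpace Ω]

def HasTransitionKernels (μ : Measure Ω) (ξ : ℕ → Ω → 𝓧) (Q : ℕ → Kernel 𝓧 𝓧) : Prop :=
  ∀ k : ℕ, 1 ≤ k → ∀ A : Set 𝓧, MeasurableSet A →
    μ[fun ω => A.indicator (fun _ => (1 : ℝ)) (ξ k ω) | pastMeasurableSpace ξ k] =ᵐ[μ]
      fun ω => (Q k (ξ (k - 1) ω) A).toReal

def HasLowerPsiMixing (μ : Measure Ω) (ξ : ℕ → Ω → 𝓧) (Q : ℕ → Kernel 𝓧 𝓧) (a : ℝ) : Prop :=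
  ∀ k : ℕ, 2 ≤ k → ∃ S' : Set 𝓧, MeasurableSet S' ∧ μ.map (ξ (k - 1)) S'ᶜ = 0 ∧
    ∀ x ∈ S', ∀ A : Set 𝓧, MeasurableSet A → ENNReal.ofReal a * μ.map (ξ k) A ≤ Q k x A

variable {μ : Measure Ω} {ξ : ℕ → Ω → 𝓧} {Q : ℕ → Kernel 𝓧 𝓧} {a : ℝ}

lemma pastMeasurableSpace_le (hξ : ∀ k, Measurable (ξ k)) (k : ℕ) :
    pastMeasurableSpace ξ k ≤ ‹MeasurableSpace Ω› :=
  iSup_le fun i => (hξ i).comap_le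

lemma HasLowerPsiMixing.ae_smul_map_le (hmix : HasLowerPsiMixing μ ξ Q a) {k : ℕ}
    (hk : 1 ≤ k) :
    ∀ᵐ x ∂μ.map (ξ k), ENNReal.ofReal a • μ.map (ξ (k + 1)) ≤ Q (k + 1) x := by
  obtain ⟨S, -, hSc, hSQ⟩ := hmix (k + 1) (by omega)
  filter_upwards [measure_eq_zero_iff_ae_notMem.mp hSc] with x hx
  exact Measure.le_iff.mpr fun A hA => hSQ x (by simpa using hx) A hA

variable [IsProbabilityMeasure μ] [∀ k, IsMarkovKernel (Q k)]

namespace HasTransitionKernels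

variable (hM : HasTransitionKernels μ ξ Q) (hξ : ∀ k, Measurable (ξ k))
include hM hξ

lemma map_succ (k : ℕ) : μ.map (ξ (k + 1)) = Q (k + 1) ∘ₘ μ.map (ξ k) := by
  simpa using map_restrict_eq_comp_of_condExp_indicator (pastMeasurableSpace_le hξ (k + 1))
    (measurable_pastMeasurableSpace k.lt_succ_self) (hξ (k + 1)) (hM (k + 1) k.succ_pos)
    (s := Set.univ) MeasurableSet.univ

lemma integral_mul_comp_succ {𝕜 : Type*} [RCLike 𝕜] {k : ℕ} {Ψ : Ω → 𝕜}
    (hΨ : StronglyMeasurable[pastMeasurableSpace ξ (k + 1)] Ψ) {D : ℝ} (hΨD : ∀ ω, ‖Ψ ω‖ ≤ D)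
    {φ : 𝓧 → 𝕜} (hφ : StronglyMeasurable φ) {C : ℝ} (hφC : ∀ y, ‖φ y‖ ≤ C) :
    ∫ ω, Ψ ω * φ (ξ (k + 1) ω) ∂μ = ∫ ω, Ψ ω * ∫ y, φ y ∂Q (k + 1) (ξ k ω) ∂μ :=
  integral_mul_comp_eq_integral_mul_kernel (pastMeasurableSpace_le hξ (k + 1))
    (measurable_pastMeasurableSpace k.lt_succ_self) (hξ (k + 1)) (hM (k + 1) k.succ_pos)
    hΨ hΨD hφ hφC

end HasTransitionKernels

namespace HasLowerPsiMixing

variable (hmix : HasLowerPsiMixing μ ξ Q a) (hξ : ∀ k, Measurable (ξ k))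
include hmix hξ

lemma le_one : a ≤ 1 := by
  have : IsProbabilityMeasure (μ.map (ξ 1)) := Measure.isProbabilityMeasure_map (hξ 1).aemeasurable
  have : IsProbabilityMeasure (μ.map (ξ 2)) := Measure.isProbabilityMeasure_map (hξ 2).aemeasurable
  obtain ⟨x, hx⟩ := (hmix.ae_smul_map_le le_rfl).exists
  exact le_one_of_ofReal_smul_le hx

lemma ae_norm_integral_sub_le (hM : HasTransitionKernels μ ξ Q) (ha : 0 ≤ a) {k : ℕ}
    (hk : 1 ≤ k) {E : Type*} [NormedAddCommGroup E] [NormedSpace ℝ E]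
    {w : 𝓧 → E} (hw : StronglyMeasurable w) {C : ℝ} (hwC : ∀ y, ‖w y‖ ≤ C) {β : ℝ}
    (hwβ : ∀ᵐ y ∂μ.map (ξ (k + 1)), ‖w y‖ ≤ β) :
    ∀ᵐ x ∂μ.map (ξ k),
      ‖∫ y, w y ∂Q (k + 1) x - a • ∫ y, w y ∂μ.map (ξ (k + 1))‖ ≤ (1 - a) * β := by
  have : IsProbabilityMeasure (μ.map (ξ (k + 1))) :=
    Measure.isProbabilityMeasure_map (hξ _).aemeasurable
  rw [hM.map_succ hξ k] at hwβ
  filter_upwards [Measure.ae_ae_of_ae_comp hwβ, hmix.ae_smul_map_le hk] with x hxβ hxQ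
  exact norm_integral_sub_smul_integral_le ha hxQ
    (Integrable.of_bound hw.aestronglyMeasurable C (ae_of_all _ hwC)) hxβ

end HasLowerPsiMixing

end MarkovChain

section CondProd

variable {Ω 𝓧 𝕜 : Type*} [MeasurableSpace Ω] [MeasurableSpace 𝓧] [RCLike 𝕜]

/-- `condProd Q φ k m x` is `E[∏_{j=k+1}^{k+m} φ j (ξ j) | ξ k = x]` for a chain with
transition kernels `Q`. -/
noncomputable def condProd (Q : ℕ → Kernel 𝓧 𝓧) (φ : ℕ → 𝓧 → 𝕜) : ℕ → ℕ → 𝓧 → 𝕜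
  | _, 0 => fun _ => 1
  | k, m + 1 => fun x => ∫ y, φ (k + 1) y * condProd Q φ (k + 1) m y ∂Q (k + 1) x

variable {Q : ℕ → Kernel 𝓧 𝓧} {φ : ℕ → 𝓧 → 𝕜}

lemma stronglyMeasurable_condProd (hφ : ∀ j, StronglyMeasurable (φ j)) (k m : ℕ) :
    StronglyMeasurable (condProd Q φ k m) := by
  induction m generalizing k with
  | zero => exact stronglyMeasurable_const
  | succ m ih => exact ((hφ (k + 1)).mul (ih (k + 1))).integral_kernel

variable [∀ k, IsMarkovKernel (Q k)]

lemma norm_condProd_le_one (hφ1 : ∀ j y, ‖φ j y‖ ≤ 1) (k m : ℕ) (x : 𝓧) :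
    ‖condProd Q φ k m x‖ ≤ 1 := by
  induction m generalizing k x with
  | zero => simp [condProd]
  | succ m ih =>
    rw [condProd]
    exact norm_integral_le_of_ae_norm_le <| ae_of_all _
      fun y => norm_mul_le_of_norm_le_one_left (hφ1 (k + 1) y) (ih (k + 1) y)

lemma HasTransitionKernels.integral_prod_mul_condProd {μ : Measure Ω} [IsProbabilityMeasure μ]
    {ξ : ℕ → Ω → 𝓧} (hM : HasTransitionKernels μ ξ Q) (hξ : ∀ k, Measurable (ξ k))
    (hφ : ∀ j, StronglyMeasurable (φ j)) (hφ1 : ∀ j y, ‖φ j y‖ ≤ 1) (k m : ℕ) :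
    ∫ ω, (∏ j ∈ Finset.Icc 1 k, φ j (ξ j ω)) * condProd Q φ k m (ξ k ω) ∂μ =
      ∫ ω, ∏ j ∈ Finset.Icc 1 (k + m), φ j (ξ j ω) ∂μ := by
  induction m generalizing k with
  | zero => simp [condProd]
  | succ m ih =>
    have hΨ : StronglyMeasurable[pastMeasurableSpace ξ (k + 1)]
        fun ω => ∏ j ∈ Finset.Icc 1 k, φ j (ξ j ω) :=
      Finset.stronglyMeasurable_fun_prod _ fun j hj => (hφ j).comp_measurable
        (measurable_pastMeasurableSpace (by simp at hj; omega))
    have hΨ1 : ∀ ω, ‖∏ j ∈ Finset.Icc 1 k, φ j (ξ j ω)‖ ≤ 1 := fun ω => by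
      rw [norm_prod]
      exact Finset.prod_le_one (fun _ _ => norm_nonneg _) fun j _ => hφ1 j _
    rw [← add_assoc, add_right_comm, ← ih (k + 1)]
    simp_rw [Finset.prod_Icc_succ_top (by omega : 1 ≤ k + 1), mul_assoc]
    exact (hM.integral_mul_comp_succ hξ hΨ hΨ1
      (φ := fun y => φ (k + 1) y * condProd Q φ (k + 1) m y)
      ((hφ (k + 1)).mul (stronglyMeasurable_condProd hφ _ _)) fun y =>
        norm_mul_le_of_norm_le_one_left (hφ1 (k + 1) y) (norm_condProd_le_one hφ1 (k + 1) m y)).symm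

end CondProd

noncomputable def contractionFactor (a F : ℝ) : ℝ := 1 - a ^ 2 / 3 * (1 - F)

lemma contractionFactor_nonneg {a F : ℝ} (ha0 : 0 ≤ a) (ha1 : a ≤ 1) (hF0 : 0 ≤ F) :
    0 ≤ contractionFactor a F := by
  unfold contractionFactor
  nlinarith [pow_le_one₀ (n := 2) ha0 ha1]

lemma potential_le_init {a F : ℝ} (ha0 : 0 ≤ a) (ha1 : a ≤ 1) (hF1 : F ≤ 1) :
    1 + a / 2 * F ≤ (1 + a / 2) * contractionFactor a F := by
  unfold contractionFactor
  nlinarith [mul_nonneg (mul_nonneg (sub_nonneg.2 hF1) ha0) (sub_nonneg.2 ha1)]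

lemma potential_le_step {a F b c c' : ℝ} (ha0 : 0 ≤ a) (ha1 : a ≤ 1) (hF0 : 0 ≤ F) (hF1 : F ≤ 1)
    (hc : 0 ≤ c) (hcb : c ≤ b) (hc' : c' ≤ a * F * c + (1 - a) * b) :
    (a * c + (1 - a) * b) + a / 2 * c' ≤ contractionFactor a F * (b + a / 2 * c) := by
  unfold contractionFactor
  have ha2 : 0 ≤ a ^ 2 := sq_nonneg a
  nlinarith [mul_le_mul_of_nonneg_left hc' (by positivity : (0 : ℝ) ≤ a / 2),
    mul_nonneg ha0 (sub_nonneg.2 hcb), mul_nonneg ha2 (sub_nonneg.2 hcb),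
    mul_nonneg (mul_nonneg ha2 hF0) (sub_nonneg.2 hcb),
    mul_nonneg (mul_nonneg ha2 hc) (mul_nonneg (sub_nonneg.2 hF1) (sub_nonneg.2 ha1))]

lemma contractionFactor_le_exp {a F : ℝ} (ha0 : 0 ≤ a) (ha1 : a ≤ 1) (hF1 : F ≤ 1) :
    contractionFactor a F ≤ Real.exp (-(a ^ 4 / 16) * (1 - F ^ 2)) := by
  unfold contractionFactor
  have ha2 : a ^ 2 ≤ 1 := pow_le_one₀ ha0 ha1
  have ha4 : 0 ≤ a ^ 2 * a ^ 2 := by positivity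
  nlinarith [Real.add_one_le_exp (-(a ^ 4 / 16) * (1 - F ^ 2)), sq_nonneg a,
    mul_nonneg (mul_nonneg (sq_nonneg a) (sub_nonneg.2 ha2)) (sub_nonneg.2 hF1),
    mul_nonneg ha4 (mul_nonneg (sub_nonneg.2 hF1) (sub_nonneg.2 hF1)),
    mul_nonneg (sq_nonneg a) (sub_nonneg.2 hF1)]

section Contraction

variable {Ω 𝓧 𝕜 : Type*} [MeasurableSpace Ω] [MeasurableSpace 𝓧] [RCLike 𝕜]
  {μ : Measure Ω} [IsProbabilityMeasure μ] {ξ : ℕ → Ω → 𝓧} {Q : ℕ → Kernel 𝓧 𝓧}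
  [∀ k, IsMarkovKernel (Q k)] {a : ℝ} {φ : ℕ → 𝓧 → 𝕜}

namespace HasLowerPsiMixing

variable (hmix : HasLowerPsiMixing μ ξ Q a) (hM : HasTransitionKernels μ ξ Q)
  (hξ : ∀ k, Measurable (ξ k)) (ha : 0 ≤ a) (hφ : ∀ j, StronglyMeasurable (φ j))
  (hφ1 : ∀ j y, ‖φ j y‖ ≤ 1)
include hmix hM hξ ha hφ hφ1

lemma exists_potential_le {k : ℕ} (hk : 1 ≤ k) (m : ℕ) :
    ∃ b, (∀ᵐ y ∂μ.map (ξ k), ‖condProd Q φ k m y‖ ≤ b) ∧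
      b + a / 2 * ‖∫ y, φ k y * condProd Q φ k m y ∂μ.map (ξ k)‖ ≤
        (1 + a / 2) * ∏ j ∈ Finset.Icc k (k + m),
          contractionFactor a ‖∫ ω, φ j (ξ j ω) ∂μ‖ := by
  have hP (j : ℕ) : IsProbabilityMeasure (μ.map (ξ j)) :=
    Measure.isProbabilityMeasure_map (hξ j).aemeasurable
  have hF (j : ℕ) : ∫ y, φ j y ∂μ.map (ξ j) = ∫ ω, φ j (ξ j ω) ∂μ :=
    integral_map (hξ j).aemeasurable (hφ j).aestronglyMeasurable
  have hF1 (j : ℕ) : ‖∫ ω, φ j (ξ j ω) ∂μ‖ ≤ 1 :=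
    norm_integral_le_of_ae_norm_le (ae_of_all _ fun ω => hφ1 j (ξ j ω))
  have ha1 : a ≤ 1 := hmix.le_one hξ
  induction m generalizing k with
  | zero =>
    refine ⟨1, ae_of_all _ fun y => by simp [condProd], ?_⟩
    simpa [condProd, hF] using potential_le_init ha ha1 (hF1 k)
  | succ m ih =>
    obtain ⟨b, hb, hbc⟩ := ih (k := k + 1) (by omega)
    set c := ∫ y, φ (k + 1) y * condProd Q φ (k + 1) m y ∂μ.map (ξ (k + 1))
    have hwb : ∀ᵐ y ∂μ.map (ξ (k + 1)), ‖φ (k + 1) y * condProd Q φ (k + 1) m y‖ ≤ b :=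
      hb.mono fun y => norm_mul_le_of_norm_le_one_left (hφ1 _ y)
    have hcb : ‖c‖ ≤ b := norm_integral_le_of_ae_norm_le hwb
    have hdec : ∀ᵐ x ∂μ.map (ξ k), ‖condProd Q φ k (m + 1) x - a • c‖ ≤ (1 - a) * b :=
      hmix.ae_norm_integral_sub_le hξ hM ha hk
        ((hφ _).mul (stronglyMeasurable_condProd hφ _ _)) (fun y =>
          norm_mul_le_of_norm_le_one_left (hφ1 (k + 1) y) (norm_condProd_le_one hφ1 (k + 1) m y))
        hwb
    have hac : ‖a • c‖ = a * ‖c‖ := by rw [norm_smul, Real.norm_of_nonneg ha]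
    refine ⟨a * ‖c‖ + (1 - a) * b, hdec.mono fun x hx => ?_, ?_⟩
    · linarith [norm_le_norm_sub_add (condProd Q φ k (m + 1) x) (a • c)]
    · have hc' := norm_integral_mul_le_of_ae_norm_sub_le (hφ k) (hφ1 k)
        (Integrable.of_bound (stronglyMeasurable_condProd hφ k (m + 1)).aestronglyMeasurable 1
          (ae_of_all _ (norm_condProd_le_one hφ1 k (m + 1)))) hdec
      rw [hF, hac] at hc'
      calc _ ≤ contractionFactor a ‖∫ ω, φ k (ξ k ω) ∂μ‖ * (b + a / 2 * ‖c‖) :=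
            potential_le_step ha ha1 (norm_nonneg _) (hF1 k) (norm_nonneg _) hcb (by linarith)
        _ ≤ _ := mul_le_mul_of_nonneg_left hbc (contractionFactor_nonneg ha ha1 (norm_nonneg _))
        _ = _ := by
          rw [← Finset.insert_Icc_add_one_left_eq_Icc (by omega : k ≤ k + (m + 1)),
            Finset.prod_insert (by simp), add_assoc k 1 m, add_comm 1 m]
          ring

theorem norm_integral_prod_le (n : ℕ) :
    ‖∫ ω, ∏ j ∈ Finset.Icc 1 n, φ j (ξ j ω) ∂μ‖ ≤
      ∏ j ∈ Finset.Icc 1 n, contractionFactor a ‖∫ ω, φ j (ξ j ω) ∂μ‖ := by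
  cases n with
  | zero => simp
  | succ n =>
    have : IsProbabilityMeasure (μ.map (ξ 1)) :=
      Measure.isProbabilityMeasure_map (hξ 1).aemeasurable
    obtain ⟨b, hb, hbc⟩ := hmix.exists_potential_le hM hξ ha hφ hφ1 le_rfl n
    have hcb : ‖∫ y, φ 1 y * condProd Q φ 1 n y ∂μ.map (ξ 1)‖ ≤ b :=
      norm_integral_le_of_ae_norm_le (hb.mono fun y => norm_mul_le_of_norm_le_one_left (hφ1 1 y))
    have heq : ∫ ω, ∏ j ∈ Finset.Icc 1 (1 + n), φ j (ξ j ω) ∂μ =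
        ∫ y, φ 1 y * condProd Q φ 1 n y ∂μ.map (ξ 1) := by
      rw [← hM.integral_prod_mul_condProd hξ hφ hφ1 1 n, integral_map (hξ 1).aemeasurable
        (f := fun y => φ 1 y * condProd Q φ 1 n y)
        ((hφ 1).mul (stronglyMeasurable_condProd hφ 1 n)).aestronglyMeasurable]
      simp
    rw [add_comm n 1, heq]
    nlinarith

end HasLowerPsiMixing

end Contraction

/-- Proposition 6 of the paper: for an additive functional `S_n = Σ g_j(ξ_j)` of a
Markov chain satisfying the one-sided lower psi-mixing condition
`Q_k(x,·) ≥ a P_k(·)` a.s., the characteristic function of `S_n` satisfies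
`|E exp(iuS_n)| ≤ exp(-(a⁴/16) Σ_{j=1}^n (1 - |f_j(u)|²))`. -/
theorem charFun_sum_bound {Ω 𝓧 : Type*} [MeasurableSpace Ω] [MeasurableSpace 𝓧]
    (μ : Measure Ω) [IsProbabilityMeasure μ]
    (ξ : ℕ → Ω → 𝓧) (hξ : ∀ k, Measurable (ξ k))
    (Q : ℕ → Kernel 𝓧 𝓧) (hQ : ∀ k, IsMarkovKernel (Q k))
    (hMarkov : ∀ k : ℕ, 1 ≤ k → ∀ A : Set 𝓧, MeasurableSet A →
      (μ[fun ω => Set.indicator A (fun _ => (1 : ℝ)) (ξ k ω) |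
          ⨆ i : Fin k, MeasurableSpace.comap (ξ i) inferInstance])
        =ᵐ[μ] fun ω => ((Q k) (ξ (k - 1) ω) A).toReal)
    (a : ℝ) (ha : 0 < a)
    (hmix : ∀ k : ℕ, 2 ≤ k → ∃ S' : Set 𝓧, MeasurableSet S' ∧
      μ.map (ξ (k - 1)) S'ᶜ = 0 ∧
      ∀ x ∈ S', ∀ A : Set 𝓧, MeasurableSet A →
        ENNReal.ofReal a * (μ.map (ξ k)) A ≤ (Q k) x A)
    (g : ℕ → 𝓧 → ℝ) (hg : ∀ j, Measurable (g j)) :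
    ∀ (n : ℕ) (u : ℝ),
      ‖∫ ω, Complex.exp (u * (∑ j ∈ Finset.Icc 1 n, g j (ξ j ω)) * I) ∂μ‖ ≤
        Real.exp (-(a ^ 4 / 16) * ∑ j ∈ Finset.Icc 1 n,
          (1 - ‖∫ ω, Complex.exp (u * g j (ξ j ω) * I) ∂μ‖ ^ 2)) := by
  intro n u
  have : ∀ k, IsMarkovKernel (Q k) := hQ
  have hmix : HasLowerPsiMixing μ ξ Q a := hmix
  have ha1 : a ≤ 1 := hmix.le_one hξ
  set φ : ℕ → 𝓧 → ℂ := fun j y => exp (u * g j y * I)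
  have hφ (j : ℕ) : StronglyMeasurable (φ j) := by
    have := hg j
    exact Measurable.stronglyMeasurable (by fun_prop)
  have hφ1 (j : ℕ) (y : 𝓧) : ‖φ j y‖ ≤ 1 := by
    simp only [φ, ← ofReal_mul, norm_exp_ofReal_mul_I, le_refl]
  have hF1 (j : ℕ) : ‖∫ ω, φ j (ξ j ω) ∂μ‖ ≤ 1 :=
    norm_integral_le_of_ae_norm_le (ae_of_all _ fun ω => hφ1 j (ξ j ω))
  have hprod (ω : Ω) : exp (u * (∑ j ∈ Finset.Icc 1 n, g j (ξ j ω)) * I) =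
      ∏ j ∈ Finset.Icc 1 n, φ j (ξ j ω) := by
    rw [← exp_sum]
    push_cast
    rw [Finset.mul_sum, Finset.sum_mul]
  simp_rw [hprod]
  calc _ ≤ ∏ j ∈ Finset.Icc 1 n, contractionFactor a ‖∫ ω, φ j (ξ j ω) ∂μ‖ :=
        hmix.norm_integral_prod_le hMarkov hξ ha.le hφ hφ1 n
    _ ≤ ∏ j ∈ Finset.Icc 1 n, Real.exp (-(a ^ 4 / 16) * (1 - ‖∫ ω, φ j (ξ j ω) ∂μ‖ ^ 2)) :=
        Finset.prod_le_prod (fun j _ => contractionFactor_nonneg ha.le ha1 (norm_nonneg _))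
          fun j _ => contractionFactor_le_exp ha.le ha1 (hF1 j)
    _ = _ := by rw [← Real.exp_sum, Finset.mul_sum]
end

section
/- For sigma-algebras A and B on a probability space, the phi-mixing coefficient satisfies φ(A,B) ≤ 1 - ψ'(A,B), where φ(A,B) = sup{ (P(A∩B) - P(A)P(B))/P(A) : A ∈ A, B ∈ B, P(A) > 0 } and ψ'(A,B) = inf{ P(A∩B)/(P(A)P(B)) : P(A)P(B) > 0 }. -/
open MeasureTheory

/-- phi-mixing coefficient of two sub-sigma-algebras. -/
noncomputable def phiMix {Ω : Type*} [MeasurableSpace Ω] (μ : Measure Ω)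
    (𝒜 ℬ : MeasurableSpace Ω) : ℝ :=
  sSup { r : ℝ | ∃ A B : Set Ω, MeasurableSet[𝒜] A ∧ MeasurableSet[ℬ] B ∧
    0 < (μ A).toReal ∧
    r = ((μ (A ∩ B)).toReal - (μ A).toReal * (μ B).toReal) / (μ A).toReal }

/-! Bounding `φ(𝒜, ℬ)` at a pair `(A, B)` uses the bound `ψ'(𝒜, ℬ)` at the pair `(A, Bᶜ)`:
`P(A ∩ B) = P(A) - P(A ∩ Bᶜ) ≤ P(A) - ψ' P(A) P(Bᶜ)`, so that
`P(A ∩ B) - P(A) P(B) ≤ (1 - ψ') P(A) P(Bᶜ) ≤ (1 - ψ') P(A)`, using `ψ' ≤ 1` (the pair `(Ω, Ω)`). -/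

namespace MeasureTheory

-- `m` is bound last so that instance resolution picks it, not `𝒜` or `ℬ`.
variable {Ω : Type*} {𝒜 ℬ : MeasurableSpace Ω} {m : MeasurableSpace Ω} (μ : Measure Ω)

theorem phiMix_le {c : ℝ} (hc : 0 ≤ c)
    (h : ∀ A B, MeasurableSet[𝒜] A → MeasurableSet[ℬ] B → 0 < μ.real A →
      μ.real (A ∩ B) - μ.real A * μ.real B ≤ c * μ.real A) :
    phiMix μ 𝒜 ℬ ≤ c := by
  refine Real.sSup_le ?_ hc
  rintro _ ⟨A, B, hA, hB, hApos, rfl⟩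
  exact (div_le_iff₀ hApos).2 (h A B hA hB hApos)

theorem psiLower_mul_le_measureReal_inter {A B : Set Ω} (hA : MeasurableSet[𝒜] A)
    (hB : MeasurableSet[ℬ] B) :
    psiLower μ 𝒜 ℬ * (μ.real A * μ.real B) ≤ μ.real (A ∩ B) := by
  rcases (by positivity : 0 ≤ μ.real A * μ.real B).eq_or_lt with hzero | hpos
  · rw [← hzero, mul_zero]
    exact measureReal_nonneg
  · refine (le_div_iff₀ hpos).1 (csInf_le ⟨0, ?_⟩ ⟨A, B, hA, hB, hpos, rfl⟩)
    rintro _ ⟨A', B', -, -, hpos', rfl⟩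
    exact div_nonneg ENNReal.toReal_nonneg hpos'.le

theorem psiLower_le_one [IsProbabilityMeasure μ] : psiLower μ 𝒜 ℬ ≤ 1 := by
  simpa using psiLower_mul_le_measureReal_inter μ (@MeasurableSet.univ _ 𝒜)
    (@MeasurableSet.univ _ ℬ)

theorem measureReal_inter_sub_mul_le_of_mul_le_inter_compl [IsProbabilityMeasure μ]
    {A B : Set Ω} {s : ℝ} (hs : s ≤ 1) (hB : MeasurableSet B)
    (h : s * (μ.real A * μ.real Bᶜ) ≤ μ.real (A ∩ Bᶜ)) :
    μ.real (A ∩ B) - μ.real A * μ.real B ≤ (1 - s) * μ.real A := by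
  have hsplit : μ.real (A ∩ B) + μ.real (A ∩ Bᶜ) = μ.real A := by
    rw [← Set.sdiff_eq, measureReal_inter_add_sdiff hB]
  have hcompl : μ.real Bᶜ = 1 - μ.real B := probReal_compl_eq_one_sub hB
  have hA : 0 ≤ μ.real A := measureReal_nonneg
  have hB' : 0 ≤ μ.real B := measureReal_nonneg
  rw [hcompl] at h
  nlinarith [mul_nonneg (mul_nonneg hA (sub_nonneg.2 hs)) hB']

end MeasureTheory

theorem phi_le_one_sub_psiLower_general {Ω : Type*} [m : MeasurableSpace Ω] (μ : Measure Ω)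
    [IsProbabilityMeasure μ] (𝒜 ℬ : MeasurableSpace Ω)
    (hℬ : ℬ ≤ m) :
    @phiMix Ω m μ 𝒜 ℬ ≤ 1 - @psiLower Ω m μ 𝒜 ℬ := by
  refine phiMix_le μ (sub_nonneg.2 (psiLower_le_one μ)) fun A B hA hB _ => ?_
  exact measureReal_inter_sub_mul_le_of_mul_le_inter_compl μ (psiLower_le_one μ) (hℬ _ hB)
    (psiLower_mul_le_measureReal_inter μ hA hB.compl)

theorem phi_le_one_sub_psiLower {Ω : Type*} [m : MeasurableSpace Ω] (μ : Measure Ω)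
    [IsProbabilityMeasure μ] (𝒜 ℬ : MeasurableSpace Ω)
    (h𝒜 : 𝒜 ≤ m) (hℬ : ℬ ≤ m) :
    @phiMix Ω m μ 𝒜 ℬ ≤ 1 - @psiLower Ω m μ 𝒜 ℬ :=
  phi_le_one_sub_psiLower_general (m := m) μ 𝒜 ℬ hℬ
end

section
/- Suppose there exist δ > 0, n₀ ∈ ℕ, and a function g with exp(−g) integrable such that (a²/16)Σ_{k=1}^n (1 − |f_k(u/B_n)|²) > g(u) for all 1 ≤ |u| ≤ δB_n and n > n₀ (Condition A), where f_k is the characteristic function of X_k, and the Markov-chain characteristic function bound |E exp(iuS_n)| ≤ exp(−(a⁴/16)Σ_{j=1}^n (1−|f_j(u)|²)) holds. Then lim_{T→∞} limsup_n ∫_{T ≤ |u| ≤ δ B_n} |E exp(iu S_n / B_n)| du = 0. -/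
open MeasureTheory Complex Filter Topology

/-
On `1 ≤ |u| ≤ δ B_n`, Condition A and the characteristic function bound at `u / B_n` dominate
`|E exp(iuS_n/B_n)|` by `exp(-g u)` for all `n > n₀`. Hence for `T ≥ 1` every integral over
`T ≤ |u| ≤ δ B_n` with `n > n₀` is at most the tail `∫_{|u| ≥ T} exp(-g)`, and this tail of an
integrable function tends to `0` as `T → ∞`.
-/

theorem tendsto_setIntegral_abs_ge_atTop {E : Type*} [NormedAddCommGroup E] [NormedSpace ℝ E]
    {f : ℝ → E} (hf : Integrable f) :
    Tendsto (fun T : ℝ => ∫ u in {u : ℝ | T ≤ |u|}, f u) atTop (𝓝 0) := by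
  have hempty : ⋂ T : ℝ, {u : ℝ | T ≤ |u|} = ∅ :=
    Set.eq_empty_of_forall_notMem fun u hu =>
      (lt_add_one |u|).not_ge (Set.mem_iInter.1 hu (|u| + 1))
  simpa [hempty] using tendsto_setIntegral_of_antitone (s := fun T : ℝ => {u : ℝ | T ≤ |u|})
    (fun T => measurableSet_le measurable_const measurable_id.abs)
    (fun _ _ hTT' _ hu => hTT'.trans hu) ⟨0, hf.integrableOn⟩

theorem tendsto_limsup_of_nonneg_of_eventually_le {α β : Type*} {l : Filter α} {l' : Filter β}
    [l'.NeBot] {F : α → β → ℝ} {G : α → ℝ} (hG : Tendsto G l (𝓝 0))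
    (hF : ∀ x y, 0 ≤ F x y) (hFG : ∀ᶠ x in l, ∀ᶠ y in l', F x y ≤ G x) :
    Tendsto (fun x => limsup (F x) l') l (𝓝 0) := by
  refine tendsto_of_tendsto_of_tendsto_of_le_of_le' tendsto_const_nhds hG ?_ ?_
  · filter_upwards [hFG] with x hx
    exact le_limsup_of_frequently_le (Frequently.of_forall (hF x)) ⟨G x, hx⟩
  · filter_upwards [hFG] with x hx
    exact limsup_le_of_le (isCoboundedUnder_le_of_le l' (hF x)) hx

theorem integral_cexp_mul_div_mul_I {Ω : Type*} [MeasurableSpace Ω] (μ : Measure Ω)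
    (X : Ω → ℝ) (u b : ℝ) :
    ∫ ω, cexp (u * (X ω / b) * I) ∂μ = ∫ ω, cexp ((u / b : ℝ) * X ω * I) ∂μ := by
  congr 1 with ω
  push_cast
  ring_nf

theorem conditionA_implies_D1_general {Ω : Type*} [MeasurableSpace Ω]
    (μ : Measure Ω)
    (S : ℕ → Ω → ℝ)
    (f : ℕ → ℝ → ℂ) (B : ℕ → ℝ)
    (a : ℝ) (δ : ℝ) (n₀ : ℕ)
    (g : ℝ → ℝ) (hgint : Integrable (fun u => Real.exp (-g u)) volume)
    (hcondA : ∀ n : ℕ, n₀ < n → ∀ u : ℝ, 1 ≤ |u| → |u| ≤ δ * B n →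
      g u < a ^ 4 / 16 * ∑ k ∈ Finset.Icc 1 n, (1 - ‖f k (u / B n)‖ ^ 2))
    (hbound : ∀ (n : ℕ) (u : ℝ),
      ‖∫ ω, Complex.exp (u * S n ω * I) ∂μ‖ ≤
        Real.exp (-(a ^ 4 / 16) * ∑ j ∈ Finset.Icc 1 n, (1 - ‖f j u‖ ^ 2))) :
    Tendsto (fun T : ℝ =>
      limsup (fun n : ℕ =>
        ∫ u in {u : ℝ | T ≤ |u| ∧ |u| ≤ δ * B n},
          ‖∫ ω, Complex.exp (u * (S n ω / B n) * I) ∂μ‖) atTop)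
      atTop (nhds 0) := by
  refine tendsto_limsup_of_nonneg_of_eventually_le (tendsto_setIntegral_abs_ge_atTop hgint)
    (fun _ _ => integral_nonneg fun _ => norm_nonneg _) ?_
  filter_upwards [eventually_ge_atTop 1] with T hT
  filter_upwards [eventually_gt_atTop n₀] with n hn
  have hdom : ∀ u ∈ {u : ℝ | T ≤ |u| ∧ |u| ≤ δ * B n},
      ‖∫ ω, cexp (u * (S n ω / B n) * I) ∂μ‖ ≤ Real.exp (-g u) := by
    rintro u ⟨hTu, huδ⟩
    rw [integral_cexp_mul_div_mul_I]
    refine (hbound n (u / B n)).trans (Real.exp_le_exp.2 ?_)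
    linarith [hcondA n hn u (hT.trans hTu) huδ]
  have hmeas : MeasurableSet {u : ℝ | T ≤ |u| ∧ |u| ≤ δ * B n} :=
    (measurableSet_le measurable_const measurable_id.abs).inter
      (measurableSet_le measurable_id.abs measurable_const)
  calc ∫ u in {u : ℝ | T ≤ |u| ∧ |u| ≤ δ * B n}, ‖∫ ω, cexp (u * (S n ω / B n) * I) ∂μ‖
      ≤ ∫ u in {u : ℝ | T ≤ |u| ∧ |u| ≤ δ * B n}, Real.exp (-g u) :=
        integral_mono_of_nonneg (.of_forall fun _ => norm_nonneg _) hgint.restrict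
          ((ae_restrict_iff' hmeas).2 (.of_forall hdom))
    _ ≤ ∫ u in {u : ℝ | T ≤ |u|}, Real.exp (-g u) :=
        setIntegral_mono_set hgint.integrableOn (.of_forall fun _ => (Real.exp_pos _).le)
          (Eventually.of_forall fun _ hu => hu.1)

/-- Verification of condition (D₁): under Condition A and the characteristic
function bound, `lim_T limsup_n ∫_{T ≤ |u| ≤ δB_n} |E exp(iuS_n/B_n)| du = 0`. -/
theorem conditionA_implies_D1 {Ω : Type*} [MeasurableSpace Ω]
    (μ : Measure Ω) [IsProbabilityMeasure μ]
    (S : ℕ → Ω → ℝ) (hS : ∀ n, Measurable (S n))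
    (f : ℕ → ℝ → ℂ) (B : ℕ → ℝ) (hB : Tendsto B atTop atTop)
    (a : ℝ) (ha : 0 < a) (δ : ℝ) (hδ : 0 < δ) (n₀ : ℕ)
    (g : ℝ → ℝ) (hgint : Integrable (fun u => Real.exp (-g u)) volume)
    (hcondA : ∀ n : ℕ, n₀ < n → ∀ u : ℝ, 1 ≤ |u| → |u| ≤ δ * B n →
      g u < a ^ 4 / 16 * ∑ k ∈ Finset.Icc 1 n, (1 - ‖f k (u / B n)‖ ^ 2))
    (hbound : ∀ (n : ℕ) (u : ℝ),
      ‖∫ ω, Complex.exp (u * S n ω * I) ∂μ‖ ≤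
        Real.exp (-(a ^ 4 / 16) * ∑ j ∈ Finset.Icc 1 n, (1 - ‖f j u‖ ^ 2))) :
    Tendsto (fun T : ℝ =>
      limsup (fun n : ℕ =>
        ∫ u in {u : ℝ | T ≤ |u| ∧ |u| ≤ δ * B n},
          ‖∫ ω, Complex.exp (u * (S n ω / B n) * I) ∂μ‖) atTop)
      atTop (nhds 0) :=
  conditionA_implies_D1_general μ S f B a δ n₀ g hgint hcondA hbound
end
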